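/- Let N₁, N₂, W₁, W₂ be positive integers, let τ, ρ ∈ ℂ with Im τ > 0 and Im ρ > 0, and let p, q, t be real numbers with p > 0 and q > 0 such that pτ = qρ + t. Then the following are equivalent. (i) There exist integers α, β, γ, δ, α′, β′, γ′, δ′ with αδ − βγ = 1 and α′δ′ − β′γ′ = 1 such that (N₁W₂/(pN₂W₁))·(qρ + t) = (α′ρ + β′)/(γ′ρ + δ′) and (W₁W₂/(qN₁N₂))·(pτ − t) = (ατ + β)/(γτ + δ). (ii) There exist integers x₀, y₀, x₀′, y₀′ satisfying p(N₂W₁)²x₀² − 2pN₁N₂W₁W₂(Re τ)x₀y₀ + p(N₁W₂)²|τ|²y₀² = qN₁N₂W₁W₂ and q(N₁N₂)²x₀′² − 2qN₁N₂W₁W₂(Re ρ)x₀′y₀′ + q(W₁W₂)²|ρ|²y₀′² = pN₁N₂W₁W₂, such that the four real numbers z₀ = (t/q)x₀ − (pN₁W₂/(qN₂W₁))|τ|²y₀, w₀ = −(2(Re ρ) + t/q)y₀ + (pN₂W₁/(qN₁W₂))x₀, z₀′ = −(t/p)x₀′ − (qW₁W₂/(pN₁N₂))|ρ|²y₀′,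 w₀′ = −(2(Re τ) − t/p)y₀′ + (qN₁N₂/(pW₁W₂))x₀′ are all integers. -/

import Mathlib

/-!
Since `pτ = qρ + t`, the left-hand side of each Möbius equation is a real multiple `σ = κτ` of `τ`
which is also a real affine function `uρ + v` of `ρ`. Clearing the denominator and substituting
`uρ = σ - v` turns `σ = (aρ + b)/(cρ + d)` into a real quadratic
`cσ² + (ud - vc - a)σ + (va - ub) = 0` at the non-real point `σ`, so it is a multiple of
`X² - 2 Re σ X + |σ|²`. This expresses `ub` and `ud` through `(a, c)`, and then
`u(ad - bc) = |a - cσ|²`: the determinant condition becomes the quadratic equation for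
`(x₀, y₀) = (a, c)`, while `z₀ = b` and `w₀ = d`.
-/

open Complex

lemma ofReal_mul_add_ofReal_eq_zero_iff {σ : ℂ} (hσ : σ.im ≠ 0) (x y : ℝ) :
    (x : ℂ) * σ + y = 0 ↔ x = 0 ∧ y = 0 := by
  constructor
  · intro h
    have hx : x = 0 := by simpa [hσ] using congrArg im h
    subst hx
    simpa using h
  · rintro ⟨rfl, rfl⟩
    simp

lemma ofReal_quadratic_eq_zero_iff {σ : ℂ} (hσ : σ.im ≠ 0) (A B C : ℝ) :
    (C : ℂ) * σ ^ 2 + B * σ + A = 0 ↔ B = -2 * σ.re * C ∧ A = normSq σ * C := by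
  have hσ_root : σ ^ 2 = 2 * σ.re * σ - normSq σ := by
    have hre := add_conj σ
    push_cast at hre
    linear_combination σ * hre - mul_conj σ
  have hlin : (C : ℂ) * σ ^ 2 + B * σ + A =
      ((B + 2 * σ.re * C : ℝ) : ℂ) * σ + ((A - normSq σ * C : ℝ) : ℂ) := by
    push_cast
    linear_combination C * hσ_root
  rw [hlin, ofReal_mul_add_ofReal_eq_zero_iff hσ]
  constructor <;> rintro ⟨h₁, h₂⟩ <;> constructor <;> linarith

lemma intCast_mul_add_intCast_ne_zero {ρ : ℂ} (hρ : ρ.im ≠ 0) {a b c d : ℤ}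
    (hdet : a * d - b * c = 1) : (c : ℂ) * ρ + d ≠ 0 := by
  intro h
  have hcd := (ofReal_mul_add_ofReal_eq_zero_iff hρ c d).mp (by exact_mod_cast h)
  obtain ⟨rfl, rfl⟩ : c = 0 ∧ d = 0 := by exact_mod_cast hcd
  simp at hdet

lemma eq_mobius_iff {ρ σ : ℂ} {u v : ℝ} (hu : u ≠ 0) (hσ : σ.im ≠ 0)
    (hσρ : σ = u * ρ + v) {a b c d : ℤ} (hD : (c : ℂ) * ρ + d ≠ 0) :
    σ = (a * ρ + b) / (c * ρ + d) ↔
      u * d = a - (2 * σ.re - v) * c ∧ u * b = v * a - normSq σ * c := by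
  have hquad : (u : ℂ) * (σ * (c * ρ + d)) - u * (a * ρ + b) =
      ((c : ℝ) : ℂ) * σ ^ 2 + ((u * d - v * c - a : ℝ) : ℂ) * σ + ((v * a - u * b : ℝ) : ℂ) := by
    push_cast
    linear_combination (a - σ * c) * hσρ
  rw [eq_div_iff hD, ← mul_right_inj' (ofReal_ne_zero.mpr hu), ← sub_eq_zero, hquad,
    ofReal_quadratic_eq_zero_iff hσ]
  constructor <;> rintro ⟨h₁, h₂⟩ <;> constructor <;> linarith

theorem exists_det_eq_one_eq_mobius_iff {ρ σ : ℂ} {u v : ℝ} (hu : u ≠ 0) (hσ : σ.im ≠ 0)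
    (hσρ : σ = u * ρ + v) :
    (∃ a b c d : ℤ, a * d - b * c = 1 ∧ σ = (a * ρ + b) / (c * ρ + d)) ↔
      ∃ a c : ℤ, (a : ℝ) ^ 2 - 2 * σ.re * (a * c) + normSq σ * c ^ 2 = u ∧
        (∃ b : ℤ, u * b = v * a - normSq σ * c) ∧ (∃ d : ℤ, u * d = a - (2 * σ.re - v) * c) := by
  have hρ : ρ.im ≠ 0 := by
    intro h
    exact hσ (by simp [hσρ, h])
  constructor
  · rintro ⟨a, b, c, d, hdet, h⟩
    obtain ⟨hd, hb⟩ := (eq_mobius_iff hu hσ hσρ (intCast_mul_add_intCast_ne_zero hρ hdet)).mp h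
    have hdetR : (a * d - b * c : ℝ) = 1 := by exact_mod_cast hdet
    exact ⟨a, c, by linear_combination u * hdetR - a * hd + c * hb, ⟨b, hb⟩, ⟨d, hd⟩⟩
  · rintro ⟨a, c, hQ, ⟨b, hb⟩, ⟨d, hd⟩⟩
    have hdet : a * d - b * c = 1 := by
      have h : u * (a * d - b * c : ℝ) = u * 1 := by linear_combination a * hd - c * hb + hQ
      exact_mod_cast mul_left_cancel₀ hu h
    exact ⟨a, b, c, d, hdet,
      (eq_mobius_iff hu hσ hσρ (intCast_mul_add_intCast_ne_zero hρ hdet)).mpr ⟨hd, hb⟩⟩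

theorem exists_det_eq_one_mobius_eq_scaled_iff {k₁ k₂ : ℝ} (hk₁ : k₁ ≠ 0) (hk₂ : k₂ ≠ 0)
    {τ ρ : ℂ} (hτ : τ.im ≠ 0) {p q t : ℝ} (hp : p ≠ 0) (hq : q ≠ 0)
    (hrel : (p : ℂ) * τ = q * ρ + t) :
    (∃ a b c d : ℤ, a * d - b * c = 1 ∧
        ((k₁ : ℂ) / (p * k₂)) * (q * ρ + t) = (a * ρ + b) / (c * ρ + d)) ↔
      ∃ x y : ℤ,
        p * k₂ ^ 2 * x ^ 2 - 2 * p * (k₁ * k₂) * τ.re * (x * y) + p * k₁ ^ 2 * ‖τ‖ ^ 2 * y ^ 2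
            = q * (k₁ * k₂) ∧
        (∃ z : ℤ, (z : ℝ) = (t / q) * x - (p * k₁ / (q * k₂)) * ‖τ‖ ^ 2 * y) ∧
        (∃ w : ℤ, (w : ℝ) = -(2 * ρ.re + t / q) * y + (p * k₂ / (q * k₁)) * x) := by
  have hστ : ((k₁ : ℂ) / (p * k₂)) * (q * ρ + t) = ((k₁ / k₂ : ℝ) : ℂ) * τ := by
    have hpC : (p : ℂ) ≠ 0 := ofReal_ne_zero.mpr hp
    have hk₂C : (k₂ : ℂ) ≠ 0 := ofReal_ne_zero.mpr hk₂
    rw [← hrel]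
    push_cast
    field_simp
  have hσρ : ((k₁ : ℂ) / (p * k₂)) * (q * ρ + t) =
      ((k₁ * q / (p * k₂) : ℝ) : ℂ) * ρ + ((k₁ * t / (p * k₂) : ℝ) : ℂ) := by
    push_cast
    ring
  have hσ : (((k₁ / k₂ : ℝ) : ℂ) * τ).im ≠ 0 := by
    rw [im_ofReal_mul]
    exact mul_ne_zero (div_ne_zero hk₁ hk₂) hτ
  have hre : p * τ.re = q * ρ.re + t := by simpa using congrArg re hrel
  rw [hστ] at hσρ ⊢
  rw [exists_det_eq_one_eq_mobius_iff (by positivity) hσ hσρ, re_ofReal_mul, normSq_mul,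
    normSq_ofReal, ← Complex.sq_norm]
  refine exists₂_congr fun x y => and_congr ?_ (and_congr (exists_congr fun z => ?_)
    (exists_congr fun w => ?_))
  · constructor <;> intro h <;> field_simp at h ⊢ <;> linear_combination h
  · constructor <;> intro h <;> field_simp at h ⊢ <;> linear_combination h
  · constructor <;> intro h <;> field_simp at h ⊢
    · linear_combination h - 2 * k₁ * y * hre
    · linear_combination h + 2 * k₁ * y * hre

/-- Self-duality condition for duality defects of type `(m,i) = (1,0)` (nontrivial mirror
symmetry) in the `c = 2` compact boson CFT with moduli `(τ, ρ)` related by `pτ = qρ + t`,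
under orbifolding by `ℤ_{N₁} × ℤ_{N₂} × ℤ_{W₁} × ℤ_{W₂}`. -/
theorem duality_defects_one_zero (N₁ N₂ W₁ W₂ : ℕ) (hN₁ : 0 < N₁) (hN₂ : 0 < N₂)
    (hW₁ : 0 < W₁) (hW₂ : 0 < W₂) (τ ρ : ℂ) (hτ : 0 < τ.im) (hρ : 0 < ρ.im)
    (p q t : ℝ) (hp : 0 < p) (hq : 0 < q) (hrel : (p : ℂ) * τ = (q : ℂ) * ρ + (t : ℂ)) :
    (∃ α β γ δ α' β' γ' δ' : ℤ,
        α * δ - β * γ = 1 ∧ α' * δ' - β' * γ' = 1 ∧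
        ((N₁ * W₂ : ℂ) / ((p : ℂ) * (N₂ * W₁))) * ((q : ℂ) * ρ + (t : ℂ)) =
          ((α' : ℂ) * ρ + β') / ((γ' : ℂ) * ρ + δ') ∧
        ((W₁ * W₂ : ℂ) / ((q : ℂ) * (N₁ * N₂))) * ((p : ℂ) * τ - (t : ℂ)) =
          ((α : ℂ) * τ + β) / ((γ : ℂ) * τ + δ)) ↔
      (∃ x₀ y₀ x₀' y₀' : ℤ,
        p * ((N₂ * W₁ : ℝ))^2 * x₀^2 - 2 * p * (N₁ * N₂ * W₁ * W₂ : ℝ) * τ.re * (x₀ * y₀)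
            + p * ((N₁ * W₂ : ℝ))^2 * ‖τ‖^2 * y₀^2
          = q * (N₁ * N₂ * W₁ * W₂ : ℝ) ∧
        q * ((N₁ * N₂ : ℝ))^2 * x₀'^2 - 2 * q * (N₁ * N₂ * W₁ * W₂ : ℝ) * ρ.re * (x₀' * y₀')
            + q * ((W₁ * W₂ : ℝ))^2 * ‖ρ‖^2 * y₀'^2
          = p * (N₁ * N₂ * W₁ * W₂ : ℝ) ∧
        (∃ z₀ : ℤ, (z₀ : ℝ) =
          (t / q) * x₀ - (p * (N₁ * W₂ : ℝ) / (q * (N₂ * W₁ : ℝ))) * ‖τ‖^2 * y₀) ∧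
        (∃ w₀ : ℤ, (w₀ : ℝ) =
          -(2 * ρ.re + t / q) * y₀ + (p * (N₂ * W₁ : ℝ) / (q * (N₁ * W₂ : ℝ))) * x₀) ∧
        (∃ z₀' : ℤ, (z₀' : ℝ) =
          -(t / p) * x₀' - (q * (W₁ * W₂ : ℝ) / (p * (N₁ * N₂ : ℝ))) * ‖ρ‖^2 * y₀') ∧
        (∃ w₀' : ℤ, (w₀' : ℝ) =
          -(2 * τ.re - t / p) * y₀' + (q * (N₁ * N₂ : ℝ) / (p * (W₁ * W₂ : ℝ))) * x₀')) := by
  have hrel' : (q : ℂ) * ρ = p * τ + ((-t : ℝ) : ℂ) := by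
    push_cast
    linear_combination -hrel
  have hτρ := exists_det_eq_one_mobius_eq_scaled_iff (k₁ := N₁ * W₂) (k₂ := N₂ * W₁)
    (by positivity) (by positivity) hτ.ne' hp.ne' hq.ne' hrel
  have hρτ := exists_det_eq_one_mobius_eq_scaled_iff (k₁ := W₁ * W₂) (k₂ := N₁ * N₂)
    (by positivity) (by positivity) hρ.ne' hq.ne' hp.ne' hrel'
  have hk : ((N₁ * W₂ : ℝ) * (N₂ * W₁)) = N₁ * N₂ * W₁ * W₂ := by ring
  have hk' : ((W₁ * W₂ : ℝ) * (N₁ * N₂)) = N₁ * N₂ * W₁ * W₂ := by ring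
  push_cast [hk, hk', neg_div, ← sub_eq_add_neg] at hτρ hρτ
  constructor
  · rintro ⟨α, β, γ, δ, α', β', γ', δ', hdet, hdet', hτ_eq, hρ_eq⟩
    obtain ⟨x₀, y₀, hQ, hz, hw⟩ := hτρ.mp ⟨α', β', γ', δ', hdet', hτ_eq⟩
    obtain ⟨x₀', y₀', hQ', hz', hw'⟩ := hρτ.mp ⟨α, β, γ, δ, hdet, hρ_eq⟩
    exact ⟨x₀, y₀, x₀', y₀', hQ, hQ', hz, hw, hz', hw'⟩
  · rintro ⟨x₀, y₀, x₀', y₀', hQ, hQ', hz, hw, hz', hw'⟩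
    obtain ⟨α', β', γ', δ', hdet', hτ_eq⟩ := hτρ.mpr ⟨x₀, y₀, hQ, hz, hw⟩
    obtain ⟨α, β, γ, δ, hdet, hρ_eq⟩ := hρτ.mpr ⟨x₀', y₀', hQ', hz', hw'⟩
    exact ⟨α, β, γ, δ, α', β', γ', δ', hdet, hdet', hτ_eq, hρ_eq⟩
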